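/- Let (R, 𝔪) be a local commutative artinian principal ideal ring of length n as a module over itself, M a finitely generated R-module, N an R-module isomorphic to R, and ⟨,⟩ : M × M → N a non-degenerate symmetric R-bilinear form. Then M admits an orthogonal decomposition M = M_1 ⊥ M_2 ⊥ ... ⊥ M_n, where each M_i is a free module over R/𝔪^i and the restriction of ⟨,⟩ to each M_i is non-degenerate (i.e. M_i ∩ M_i^⊥ = 0). -/

import Mathlib

/-!
Let `π` generate `𝔪`. Every element of `R` is a unit times a power of `π`, so the ideals of `R`
are the chain `(π ^ j)`, `j ≤ n`, and the length `n` of `R` is the nilpotency index of `π`; in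
particular the annihilator of `π ^ a` is `(π ^ (n - a))`.

Let `W` be a nonzero submodule on which the form is nondegenerate and `a` the least exponent with
`π ^ a W = 0`. All values of the form on `W` lie in `(π ^ (n - a))`, and nondegeneracy gives
`x, y ∈ W` with `π ^ (a - 1) ⟨x, y⟩ ≠ 0`. Either some `z ∈ W` has `π ^ (a - 1) ⟨z, z⟩ ≠ 0`, or
the diagonal values `⟨x, x⟩, ⟨y, y⟩` lie in `(π ^ (n - a + 1))` while `⟨x, y⟩` generates
`(π ^ (n - a))`. In both cases the Gram matrix of `z`, resp. `x, y`, is `π ^ (n - a)` times an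
invertible matrix, so their span `U` is free over `R ⧸ 𝔪 ^ a`, nondegenerate, and
`W = U ⊥ (W ∩ U^⊥)`. Artinian induction on `W` then collects the pieces `U` according to their
exponent `a`.
-/

/-- The orthogonal complement of a submodule with respect to a bilinear form. -/
def orth {R M N : Type*} [CommRing R] [AddCommGroup M] [Module R M]
    [AddCommGroup N] [Module R N] (B : M →ₗ[R] M →ₗ[R] N) (L : Submodule R M) :
    Submodule R M where
  carrier := {x | ∀ l ∈ L, B x l = 0}
  add_mem' := by
    intro a b ha hb l hl
    simp [ha l hl, hb l hl]
  zero_mem' := by intro l hl; simp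
  smul_mem' := by
    intro c a ha l hl
    simp [ha l hl]

open IsLocalRing

theorem pow_eq_zero_iff_nilpotencyClass_le {R : Type*} [MonoidWithZero R] [Nontrivial R] {x : R}
    (hx : IsNilpotent x) {j : ℕ} : x ^ j = 0 ↔ nilpotencyClass x ≤ j := by
  refine ⟨fun h => ?_, fun h => pow_eq_zero_of_le h (pow_nilpotencyClass hx)⟩
  by_contra! hj
  exact pow_pred_nilpotencyClass hx (pow_eq_zero_of_le (by omega) h)

theorem Order.krullDim_fin (k : ℕ) : Order.krullDim (Fin (k + 1)) = k := by
  refine le_antisymm (iSup_le fun p => ?_) ?_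
  · have := p.length_lt_card
    rw [Fintype.card_fin] at this
    exact_mod_cast Nat.lt_succ_iff.mp this
  · exact LTSeries.length_le_krullDim ⟨k, id, fun i => Fin.castSucc_lt_succ⟩

section UniformizerPowers

variable {R : Type*} [CommRing R] {π : R} {n : ℕ}

theorem pow_notMem_span_pow_succ (hπn : ∀ j, π ^ j = 0 ↔ n ≤ j) {j : ℕ} (hj : j < n) :
    π ^ j ∉ Ideal.span {π ^ (j + 1)} := by
  intro h
  obtain ⟨s, hs⟩ := Ideal.mem_span_singleton'.mp h
  have : π ^ (n - 1) = s * π ^ n := by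
    calc π ^ (n - 1) = π ^ (n - 1 - j) * π ^ j := by rw [← pow_add]; congr 1; omega
      _ = s * π ^ (n - 1 - j + (j + 1)) := by rw [← hs, pow_add]; ring
      _ = s * π ^ n := by congr 2; omega
  exact absurd ((hπn _).1 (this.trans (by rw [(hπn n).2 le_rfl, mul_zero]))) (by omega)

variable [IsLocalRing R]

theorem exists_eq_isUnit_mul_pow (hπ : maximalIdeal R = Ideal.span {π})
    (hπn : ∀ j, π ^ j = 0 ↔ n ≤ j) (c : R) : ∃ j ≤ n, ∃ u, IsUnit u ∧ c = u * π ^ j := by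
  classical
  rcases eq_or_ne c 0 with rfl | hc
  · exact ⟨n, le_rfl, 1, isUnit_one, by rw [(hπn n).2 le_rfl, mul_zero]⟩
  let P : ℕ → Prop := fun j => c ∈ Ideal.span {π ^ j}
  obtain ⟨u, hu⟩ := Ideal.mem_span_singleton'.mp
    (Nat.findGreatest_spec (P := P) (Nat.zero_le n) (by simp [P]))
  refine ⟨_, Nat.findGreatest_le n, u, ?_, hu.symm⟩
  by_contra hu'
  rw [← notMem_maximalIdeal, not_not, hπ] at hu'
  obtain ⟨s, rfl⟩ := Ideal.mem_span_singleton'.mp hu'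
  have hsucc : P (Nat.findGreatest P n + 1) :=
    Ideal.mem_span_singleton'.mpr ⟨s, by rw [← hu]; ring⟩
  rcases (Nat.findGreatest_le (P := P) n).lt_or_eq with hj | hj
  · exact Nat.findGreatest_is_greatest (Nat.lt_succ_self _) hj hsucc
  · exact hc (by rw [← hu, mul_assoc, ← pow_succ', hj, (hπn _).2 (by omega), mul_zero])

theorem mem_span_pow_of_pow_mul_eq_zero (hπ : maximalIdeal R = Ideal.span {π})
    (hπn : ∀ j, π ^ j = 0 ↔ n ≤ j) {j : ℕ} {r : R} (h : π ^ j * r = 0) :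
    r ∈ Ideal.span {π ^ (n - j)} := by
  obtain ⟨i, -, u, hu, rfl⟩ := exists_eq_isUnit_mul_pow hπ hπn r
  have : n ≤ j + i := (hπn _).1 <| by
    rwa [mul_left_comm, ← pow_add, hu.mul_right_eq_zero] at h
  exact Ideal.mem_span_singleton.mpr (dvd_mul_of_dvd_right (pow_dvd_pow π (by omega)) u)

theorem exists_isUnit_eq_mul_pow (hπ : maximalIdeal R = Ideal.span {π})
    (hπn : ∀ j, π ^ j = 0 ↔ n ≤ j) {a : ℕ} {c : R} (h : π ^ a * c = 0)
    (h' : π ^ (a - 1) * c ≠ 0) : ∃ w, IsUnit w ∧ c = π ^ (n - a) * w := by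
  obtain ⟨i, hi, u, hu, rfl⟩ := exists_eq_isUnit_mul_pow hπ hπn c
  have key : ∀ b, π ^ b * (u * π ^ i) = 0 ↔ n ≤ b + i := fun b => by
    rw [mul_left_comm, ← pow_add, hu.mul_right_eq_zero, hπn]
  rw [key] at h
  rw [Ne, key] at h'
  exact ⟨u, hu, by rw [mul_comm, show i = n - a by omega]⟩

theorem krullDim_submodule_eq_of_maximalIdeal_eq_span [IsPrincipalIdealRing R]
    (hπ : maximalIdeal R = Ideal.span {π}) (hπn : ∀ j, π ^ j = 0 ↔ n ≤ j) :
    Order.krullDim (Submodule R R) = n := by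
  let f : (Fin (n + 1))ᵒᵈ → Ideal R := fun j =>
    Ideal.span {π ^ ((OrderDual.ofDual j : Fin (n + 1)) : ℕ)}
  have hf : StrictMono f := fun i j hij => by
    set a : ℕ := ((OrderDual.ofDual i : Fin (n + 1)) : ℕ)
    set b : ℕ := ((OrderDual.ofDual j : Fin (n + 1)) : ℕ)
    have ha : a < n + 1 := (OrderDual.ofDual i).isLt
    have hba : b < a := hij
    refine lt_of_le_of_ne (Ideal.span_singleton_le_span_singleton.mpr (pow_dvd_pow π hba.le))
      fun heq => pow_notMem_span_pow_succ hπn (j := b) (by omega) ?_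
    have hmem : π ^ b ∈ f i := heq ▸ Ideal.mem_span_singleton_self _
    exact Ideal.span_singleton_le_span_singleton.mpr (pow_dvd_pow π hba) hmem
  have hsurj : Function.Surjective f := fun I => by
    obtain ⟨c, rfl⟩ := (IsPrincipalIdealRing.principal I).principal
    obtain ⟨j, hj, u, hu, rfl⟩ := exists_eq_isUnit_mul_pow hπ hπn c
    exact ⟨OrderDual.toDual ⟨j, by omega⟩, (Ideal.span_singleton_mul_left_unit hu _).symm⟩
  rw [← Order.krullDim_eq_of_orderIso (hf.orderIsoOfSurjective f hsurj), Order.krullDim_orderDual,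
    Order.krullDim_fin]

theorem pow_eq_zero_iff_of_krullDim_eq [IsArtinianRing R] [IsPrincipalIdealRing R]
    (hπ : maximalIdeal R = Ideal.span {π}) (hn : Order.krullDim (Submodule R R) = n) (j : ℕ) :
    π ^ j = 0 ↔ n ≤ j := by
  have hnil : IsNilpotent π := by
    rw [← mem_nilradical, Ring.KrullDimLE.nilradical_eq_maximalIdeal, hπ]
    exact Ideal.mem_span_singleton_self π
  have hclass : ∀ j, π ^ j = 0 ↔ nilpotencyClass π ≤ j := fun _ =>
    pow_eq_zero_iff_nilpotencyClass_le hnil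
  have hdim : (n : WithBot ℕ∞) = nilpotencyClass π := by
    rw [← hn, krullDim_submodule_eq_of_maximalIdeal_eq_span hπ hclass]
  rw [hclass, show n = nilpotencyClass π by exact_mod_cast hdim]

end UniformizerPowers

section Orthogonal

variable {R M N : Type*} [CommRing R] [AddCommGroup M] [Module R M] [AddCommGroup N] [Module R N]
  {B : M →ₗ[R] M →ₗ[R] N}

theorem mem_orth_span_range {ι : Type*} {v : ι → M} {x : M} :
    x ∈ orth B (Submodule.span R (Set.range v)) ↔ ∀ i, B x (v i) = 0 :=
  ⟨fun h i => h _ (Submodule.subset_span ⟨i, rfl⟩),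
    fun h _ hl =>
      (Submodule.span_le (p := LinearMap.ker (B x))).mpr (Set.range_subset_iff.mpr h) hl⟩

theorem orth_anti {P Q : Submodule R M} (h : P ≤ Q) : orth B Q ≤ orth B P :=
  fun _ hx l hl => hx l (h hl)

theorem orth_sup (P Q : Submodule R M) : orth B (P ⊔ Q) = orth B P ⊓ orth B Q := by
  refine le_antisymm (le_inf (orth_anti le_sup_left) (orth_anti le_sup_right)) ?_
  rintro x ⟨hP, hQ⟩ l hl
  obtain ⟨p, hp, q, hq, rfl⟩ := Submodule.mem_sup.mp hl
  rw [map_add, hP p hp, hQ q hq, add_zero]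

theorem le_orth_comm (hB : ∀ x y, B x y = B y x) {P Q : Submodule R M} :
    P ≤ orth B Q ↔ Q ≤ orth B P :=
  ⟨fun h q hq p hp => hB q p ▸ h hp q hq, fun h p hp q hq => hB p q ▸ h hq p hp⟩

theorem orth_compr₂_of_injective {P : Type*} [AddCommGroup P] [Module R P] {e : N →ₗ[R] P}
    (he : Function.Injective e) (L : Submodule R M) : orth (B.compr₂ e) L = orth B L := by
  ext x
  exact forall₂_congr fun l _ => map_eq_zero_iff e he

theorem disjoint_orth_sup {P Q : Submodule R M} (hP : Disjoint P (orth B P))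
    (hQ : Disjoint Q (orth B Q)) (hPQ : P ≤ orth B Q) (hQP : Q ≤ orth B P) :
    Disjoint (P ⊔ Q) (orth B (P ⊔ Q)) := by
  rw [orth_sup, Submodule.disjoint_def]
  rintro _ hz ⟨hzP, hzQ⟩
  obtain ⟨p, hp, q, hq, rfl⟩ := Submodule.mem_sup.mp hz
  have hp0 : p = 0 := Submodule.disjoint_def.mp hP p hp fun l hl => by
    simpa [hQP hq l hl] using hzP l hl
  have hq0 : q = 0 := Submodule.disjoint_def.mp hQ q hq fun l hl => by
    simpa [hPQ hp l hl] using hzQ l hl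
  rw [hp0, hq0, add_zero]

theorem disjoint_orth_of_sup {P Q : Submodule R M} (hPQ : P ≤ orth B Q)
    (h : Disjoint (P ⊔ Q) (orth B (P ⊔ Q))) : Disjoint P (orth B P) :=
  Submodule.disjoint_def.mpr fun z hzP hz =>
    Submodule.disjoint_def.mp h z (Submodule.mem_sup_left hzP) <| by
      rw [orth_sup]
      exact ⟨hz, hPQ hzP⟩

structure IsOrthDecomposition {ι : Type*} (B : M →ₗ[R] M →ₗ[R] N) (W : Submodule R M)
    (V : ι → Submodule R M) : Prop where
  iSup_eq : ⨆ i, V i = W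
  le_orth : ∀ i j, i ≠ j → V i ≤ orth B (V j)
  disjoint_orth : ∀ i, Disjoint (V i) (orth B (V i))

namespace IsOrthDecomposition

variable {ι : Type*} {W : Submodule R M} {V : ι → Submodule R M}

theorem bot : IsOrthDecomposition B ⊥ (fun _ : ι => ⊥) :=
  ⟨iSup_bot, fun _ _ _ => bot_le, fun _ => disjoint_bot_left⟩

theorem iSupIndep (h : IsOrthDecomposition B W V) : iSupIndep V := fun i =>
  (h.disjoint_orth i).mono_right (iSup₂_le fun j hj => h.le_orth j i hj)

theorem le (h : IsOrthDecomposition B W V) (i : ι) : V i ≤ W :=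
  h.iSup_eq ▸ le_iSup V i

theorem update [DecidableEq ι] (h : IsOrthDecomposition B W V) (hB : ∀ x y, B x y = B y x)
    {U : Submodule R M} (hU : Disjoint U (orth B U)) (hWU : W ≤ orth B U) (i₀ : ι) :
    IsOrthDecomposition B (U ⊔ W) (Function.update V i₀ (U ⊔ V i₀)) := by
  have hUW : U ≤ orth B W := (le_orth_comm hB).mpr hWU
  have hUV : ∀ i, U ≤ orth B (V i) := fun i => hUW.trans (orth_anti (h.le i))
  refine ⟨le_antisymm (iSup_le fun i => ?_) (sup_le ?_ ?_), fun i j hij => ?_, fun i => ?_⟩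
  · rcases eq_or_ne i i₀ with rfl | hi
    · rw [Function.update_self]
      exact sup_le_sup_left (h.le i) U
    · rw [Function.update_of_ne hi]
      exact le_sup_of_le_right (h.le i)
  · exact le_iSup_of_le i₀ (by rw [Function.update_self]; exact le_sup_left)
  · rw [← h.iSup_eq]
    refine iSup_mono fun i => ?_
    rcases eq_or_ne i i₀ with rfl | hi
    · rw [Function.update_self]; exact le_sup_right
    · rw [Function.update_of_ne hi]
  · rcases eq_or_ne i i₀ with rfl | hi
    · rw [Function.update_self, Function.update_of_ne hij.symm]
      exact sup_le (hUV j) (h.le_orth i j hij)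
    rw [Function.update_of_ne hi]
    rcases eq_or_ne j i₀ with rfl | hj
    · rw [Function.update_self, orth_sup]
      exact le_inf ((h.le i).trans hWU) (h.le_orth i j hij)
    · rw [Function.update_of_ne hj]
      exact h.le_orth i j hij
  · rcases eq_or_ne i i₀ with rfl | hi
    · rw [Function.update_self]
      exact disjoint_orth_sup hU (h.disjoint_orth i) (hUV i) ((h.le i).trans hWU)
    · rw [Function.update_of_ne hi]
      exact h.disjoint_orth i

end IsOrthDecomposition

end Orthogonal

section FreeQuotient

variable {R M : Type*} [CommRing R] [AddCommGroup M] [Module R M]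

theorem nonempty_span_equiv_pi_quotient {ι : Type*} [Fintype ι] [DecidableEq ι] (I : Ideal R)
    {v : ι → M} (hv : ∀ c : ι → R, ∑ i, c i • v i = 0 ↔ ∀ i, c i ∈ I) :
    Nonempty (Submodule.span R (Set.range v) ≃ₗ[R] (ι → R ⧸ I)) := by
  have hker : LinearMap.ker (Fintype.linearCombination R v) = Submodule.pi Set.univ fun _ => I := by
    ext c
    simp [Fintype.linearCombination_apply, hv]
  exact ⟨(LinearEquiv.ofEq _ _ (Fintype.range_linearCombination R v)).symm ≪≫ₗ
    (LinearMap.quotKerEquivRange _).symm ≪≫ₗ Submodule.quotEquivOfEq _ _ hker ≪≫ₗ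
    Submodule.quotientPi _⟩

theorem nonempty_sup_equiv_pi_of_disjoint {Q : Type*} [AddCommGroup Q] [Module R Q]
    {P P' : Submodule R M} (hd : Disjoint P P') {k k' : ℕ} (e : P ≃ₗ[R] (Fin k → Q))
    (e' : P' ≃ₗ[R] (Fin k' → Q)) : Nonempty (↥(P ⊔ P') ≃ₗ[R] (Fin (k + k') → Q)) := by
  have hinj : Function.Injective (P.subtype.coprod P'.subtype) := by
    rw [← LinearMap.ker_eq_bot, LinearMap.ker_coprod_of_disjoint_range _ _ (by simpa using hd)]
    simp
  have hrange : LinearMap.range (P.subtype.coprod P'.subtype) = P ⊔ P' := by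
    rw [LinearMap.range_coprod, Submodule.range_subtype, Submodule.range_subtype]
  exact ⟨(LinearEquiv.ofInjective _ hinj ≪≫ₗ LinearEquiv.ofEq _ _ hrange).symm ≪≫ₗ
    e.prodCongr e' ≪≫ₗ (LinearEquiv.sumArrowLequivProdArrow _ _ R Q).symm ≪≫ₗ
    LinearEquiv.funCongrLeft R Q finSumFinEquiv.symm⟩

end FreeQuotient

section GramMatrix

open Matrix

variable {R : Type*} [CommRing R] {ι : Type*} [Fintype ι]

theorem vecMul_mem_of_forall_mem {I : Ideal R} {y : ι → R} (hy : ∀ i, y i ∈ I) {κ : Type*}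
    (A : Matrix ι κ R) (j : κ) : (y ᵥ* A) j ∈ I :=
  Ideal.sum_mem _ fun i _ => Ideal.mul_mem_right _ _ (hy i)

theorem exists_vecMul_smul_eq [DecidableEq ι] {G : Matrix ι ι R} (hG : IsUnit G) {x : R} {d : ι → R}
    (hd : ∀ i, d i ∈ Ideal.span {x}) : ∃ c, c ᵥ* (x • G) = d := by
  choose d' hd' using fun i => Ideal.mem_span_singleton'.mp (hd i)
  refine ⟨d' ᵥ* G⁻¹, ?_⟩
  rw [vecMul_smul, vecMul_vecMul, nonsing_inv_mul _ ((isUnit_iff_isUnit_det G).mp hG), vecMul_one]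
  ext i
  simp [← hd', mul_comm]

theorem vecMul_gram {M : Type*} [AddCommGroup M] [Module R M] (C : M →ₗ[R] M →ₗ[R] R)
    (v : ι → M) (c : ι → R) (i : ι) :
    C (∑ j, c j • v j) (v i) = (c ᵥ* Matrix.of fun j k => C (v j) (v k)) i := by
  simp [vecMul, dotProduct, map_sum, map_smul]

theorem mem_span_pow_of_vecMul_pow_smul_eq_zero [DecidableEq ι] [IsLocalRing R] {π : R} {n a : ℕ}
    (hπ : maximalIdeal R = Ideal.span {π}) (hπn : ∀ j, π ^ j = 0 ↔ n ≤ j) (ha : a ≤ n)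
    {G : Matrix ι ι R} (hG : IsUnit G) {c : ι → R} (hc : c ᵥ* (π ^ (n - a) • G) = 0) (i : ι) :
    c i ∈ Ideal.span {π ^ a} := by
  have hcG : ∀ j, (c ᵥ* G) j ∈ Ideal.span {π ^ a} := fun j => by
    have h := mem_span_pow_of_pow_mul_eq_zero hπ hπn (j := n - a) (r := (c ᵥ* G) j)
      (by simpa [vecMul_smul] using congrFun hc j)
    rwa [Nat.sub_sub_self ha] at h
  rw [← vecMul_one c, ← mul_nonsing_inv G ((isUnit_iff_isUnit_det G).mp hG), ← vecMul_vecMul]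
  exact vecMul_mem_of_forall_mem hcG _ i

end GramMatrix

theorem exists_minimal_pow_smul_eq_zero {R M : Type*} [CommRing R] [AddCommGroup M] [Module R M]
    {x : R} {n : ℕ} (hx : x ^ n = 0) {W : Submodule R M} (hW : W ≠ ⊥) :
    ∃ a, 0 < a ∧ a ≤ n ∧ (∀ m ∈ W, x ^ a • m = 0) ∧ ∃ m ∈ W, x ^ (a - 1) • m ≠ 0 := by
  classical
  have hex : ∃ j, ∀ m ∈ W, x ^ j • m = 0 := ⟨n, fun m _ => by rw [hx, zero_smul]⟩
  have hpos : 0 < Nat.find hex := Nat.pos_of_ne_zero fun h0 => hW <|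
    (Submodule.eq_bot_iff W).mpr fun m hm => by simpa [h0] using Nat.find_spec hex m hm
  refine ⟨Nat.find hex, hpos, Nat.find_min' hex fun m _ => by rw [hx, zero_smul],
    Nat.find_spec hex, ?_⟩
  by_contra! h
  exact Nat.find_min hex (Nat.sub_lt hpos one_pos) h

section Splitting

open Matrix

variable {R M : Type*} [CommRing R] [IsLocalRing R] [AddCommGroup M] [Module R M] {π : R} {n : ℕ}
  {C : M →ₗ[R] M →ₗ[R] R}

theorem orthogonal_split_of_gram_eq_pow_smul (hπ : maximalIdeal R = Ideal.span {π})
    (hπn : ∀ j, π ^ j = 0 ↔ n ≤ j) {W : Submodule R M} {a : ℕ} (ha : a ≤ n)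
    (hkill : ∀ m ∈ W, π ^ a • m = 0) {r : ℕ} {v : Fin r → M} (hvW : ∀ i, v i ∈ W)
    {G : Matrix (Fin r) (Fin r) R} (hG : IsUnit G)
    (hgram : Matrix.of (fun i j => C (v i) (v j)) = π ^ (n - a) • G) :
    Nonempty (Submodule.span R (Set.range v) ≃ₗ[R] (Fin r → R ⧸ maximalIdeal R ^ a)) ∧
      Disjoint (Submodule.span R (Set.range v)) (orth C (Submodule.span R (Set.range v))) ∧
      Submodule.span R (Set.range v) ⊔ (W ⊓ orth C (Submodule.span R (Set.range v))) = W := by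
  set U := Submodule.span R (Set.range v)
  have hUW : U ≤ W := Submodule.span_le.mpr (Set.range_subset_iff.mpr hvW)
  have hperp : ∀ c : Fin r → R, (∀ i, C (∑ j, c j • v j) (v i) = 0) →
      ∀ i, c i ∈ Ideal.span {π ^ a} := fun c h =>
    mem_span_pow_of_vecMul_pow_smul_eq_zero hπ hπn ha hG <| by
      ext i
      rw [← hgram, ← vecMul_gram, h i, Pi.zero_apply]
  have hsum : ∀ c : Fin r → R, (∀ i, c i ∈ Ideal.span {π ^ a}) → ∑ i, c i • v i = 0 :=
    fun c hc => Finset.sum_eq_zero fun i _ => by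
      obtain ⟨s, hs⟩ := Ideal.mem_span_singleton'.mp (hc i)
      rw [← hs, mul_smul, hkill _ (hvW i), smul_zero]
  refine ⟨?_, ?_, ?_⟩
  · rw [hπ, Ideal.span_singleton_pow]
    exact nonempty_span_equiv_pi_quotient _ fun c => ⟨fun h => hperp c (by simp [h]), hsum c⟩
  · refine Submodule.disjoint_def.mpr fun z hz hz' => ?_
    obtain ⟨c, rfl⟩ := (Submodule.mem_span_range_iff_exists_fun R).mp hz
    exact hsum c (hperp c (mem_orth_span_range.mp hz'))
  · refine le_antisymm (sup_le hUW inf_le_left) fun m hm => ?_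
    have hd : ∀ i, C m (v i) ∈ Ideal.span {π ^ (n - a)} := fun i =>
      mem_span_pow_of_pow_mul_eq_zero hπ hπn <| by
        rw [← smul_eq_mul, ← LinearMap.map_smul₂, hkill m hm, map_zero, LinearMap.zero_apply]
    obtain ⟨c, hc⟩ := exists_vecMul_smul_eq hG hd
    have hu : ∑ j, c j • v j ∈ U := (Submodule.mem_span_range_iff_exists_fun R).mpr ⟨c, rfl⟩
    rw [← add_sub_cancel (∑ j, c j • v j) m]
    refine Submodule.add_mem_sup hu ⟨W.sub_mem hm (hUW hu), mem_orth_span_range.mpr fun i => ?_⟩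
    rw [map_sub, LinearMap.sub_apply, vecMul_gram, hgram, hc, sub_self]

theorem exists_gram_eq_pow_smul_isUnit (hπ : maximalIdeal R = Ideal.span {π})
    (hπn : ∀ j, π ^ j = 0 ↔ n ≤ j) (hC : ∀ x y, C x y = C y x) {W : Submodule R M} {a : ℕ}
    (ha0 : 0 < a) (ha : a ≤ n) (hkill : ∀ m ∈ W, π ^ a • m = 0) {x y : M} (hx : x ∈ W)
    (hy : y ∈ W) (hxy : π ^ (a - 1) * C x y ≠ 0) :
    ∃ (r : ℕ) (v : Fin r → M) (G : Matrix (Fin r) (Fin r) R), (∀ i, v i ∈ W) ∧ IsUnit G ∧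
      Matrix.of (fun i j => C (v i) (v j)) = π ^ (n - a) • G ∧ ∃ i j, C (v i) (v j) ≠ 0 := by
  have hCkill : ∀ z ∈ W, ∀ z', π ^ a * C z z' = 0 := fun z hz z' => by
    rw [← smul_eq_mul, ← LinearMap.map_smul₂, hkill z hz, map_zero, LinearMap.zero_apply]
  by_cases hA : ∃ z ∈ W, π ^ (a - 1) * C z z ≠ 0
  · obtain ⟨z, hz, hzz⟩ := hA
    obtain ⟨w, hw, hzw⟩ := exists_isUnit_eq_mul_pow hπ hπn (hCkill z hz z) hzz
    refine ⟨1, ![z], !![w], fun _ => by simpa using hz, ?_, ?_, 0, 0, right_ne_zero_of_mul hzz⟩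
    · rwa [isUnit_iff_isUnit_det, det_fin_one_of]
    · ext i j
      fin_cases i; fin_cases j
      simp [hzw]
  · push Not at hA
    obtain ⟨w, hw, hxyw⟩ := exists_isUnit_eq_mul_pow hπ hπn (hCkill x hx y) hxy
    have hdiag : ∀ z ∈ W, ∃ t, C z z = π ^ (n - a) * (π * t) := fun z hz => by
      obtain ⟨t, ht⟩ :=
        Ideal.mem_span_singleton'.mp (mem_span_pow_of_pow_mul_eq_zero hπ hπn (hA z hz))
      refine ⟨t, ?_⟩
      rw [← ht, ← mul_assoc, ← pow_succ, show n - a + 1 = n - (a - 1) by omega, mul_comm]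
    obtain ⟨t, ht⟩ := hdiag x hx
    obtain ⟨s, hs⟩ := hdiag y hy
    refine ⟨2, ![x, y], !![π * t, w; w, π * s], fun i => by fin_cases i <;> simpa, ?_, ?_, 0, 1,
      right_ne_zero_of_mul hxy⟩
    · have hπ0 : residue R π = 0 :=
        (residue_eq_zero_iff π).mpr (hπ ▸ Ideal.mem_span_singleton_self π)
      rw [isUnit_iff_isUnit_det, det_fin_two_of, ← residue_ne_zero_iff_isUnit]
      simp [hπ0, hw]
    · ext i j
      fin_cases i <;> fin_cases j <;> simp [ht, hs, hxyw, hC y x]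

theorem exists_free_orth_summand (hπ : maximalIdeal R = Ideal.span {π})
    (hπn : ∀ j, π ^ j = 0 ↔ n ≤ j) (hC : ∀ x y, C x y = C y x) {W : Submodule R M}
    (hW : Disjoint W (orth C W)) (hW0 : W ≠ ⊥) :
    ∃ a, 0 < a ∧ a ≤ n ∧ ∃ U : Submodule R M,
      (∃ k, Nonempty (U ≃ₗ[R] (Fin k → R ⧸ maximalIdeal R ^ a))) ∧
      Disjoint U (orth C U) ∧ U ⊔ (W ⊓ orth C U) = W ∧ W ⊓ orth C U < W := by
  obtain ⟨a, ha0, ha, hkill, x, hx, hx0⟩ := exists_minimal_pow_smul_eq_zero ((hπn n).2 le_rfl) hW0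
  obtain ⟨y, hy, hxy⟩ : ∃ y ∈ W, π ^ (a - 1) * C x y ≠ 0 := by
    by_contra! h
    exact hx0 (Submodule.disjoint_def.mp hW _ (W.smul_mem _ hx) fun y hy => by simpa using h y hy)
  obtain ⟨r, v, G, hvW, hG, hgram, i, j, hij⟩ :=
    exists_gram_eq_pow_smul_isUnit hπ hπn hC ha0 ha hkill hx hy hxy
  obtain ⟨hfree, hdisj, hsup⟩ := orthogonal_split_of_gram_eq_pow_smul hπ hπn ha hkill hvW hG hgram
  refine ⟨a, ha0, ha, _, ⟨r, hfree⟩, hdisj, hsup, inf_le_left.lt_of_ne fun h => hij ?_⟩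
  have hvi : v i ∈ W ⊓ orth C (Submodule.span R (Set.range v)) := by rw [h]; exact hvW i
  exact hvi.2 _ (Submodule.subset_span ⟨j, rfl⟩)

theorem exists_isOrthDecomposition [IsArtinian R M] (hπ : maximalIdeal R = Ideal.span {π})
    (hπn : ∀ j, π ^ j = 0 ↔ n ≤ j) (hC : ∀ x y, C x y = C y x) (W : Submodule R M)
    (hW : Disjoint W (orth C W)) :
    ∃ V : Fin n → Submodule R M, IsOrthDecomposition C W V ∧
      ∀ i, ∃ k, Nonempty (V i ≃ₗ[R] (Fin k → R ⧸ maximalIdeal R ^ (i.val + 1))) := by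
  induction W using IsArtinian.induction with
  | _ W ih =>
  rcases eq_or_ne W ⊥ with rfl | hW0
  · exact ⟨fun _ => ⊥, .bot, fun _ => ⟨0, ⟨LinearEquiv.ofSubsingleton _ _⟩⟩⟩
  obtain ⟨a, ha0, ha, U, ⟨r, ⟨eU⟩⟩, hU, hsup, hlt⟩ := exists_free_orth_summand hπ hπn hC hW hW0
  obtain ⟨V, hV, hfree⟩ :=
    ih _ hlt (disjoint_orth_of_sup inf_le_right (by rwa [sup_comm, hsup]))
  let i₀ : Fin n := ⟨a - 1, by omega⟩
  refine ⟨Function.update V i₀ (U ⊔ V i₀), hsup ▸ hV.update hC hU inf_le_right i₀, fun i => ?_⟩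
  rcases eq_or_ne i i₀ with rfl | hi
  · obtain ⟨k, ⟨eV⟩⟩ := hfree i₀
    have hi₀ : i₀.val + 1 = a := by simp only [i₀]; omega
    rw [hi₀] at eV
    rw [Function.update_self, hi₀]
    exact ⟨r + k, nonempty_sup_equiv_pi_of_disjoint
      (hU.mono_right ((hV.le i₀).trans inf_le_right)) eU eV⟩
  · rw [Function.update_of_ne hi]
    exact hfree i

end Splitting

/-- Let `(R, 𝔪)` be a local commutative artinian principal ideal ring of length `n` as a
module over itself, `M` a finitely generated `R`-module, `N ≅ R`, and `⟨,⟩ : M × M → N` a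
non-degenerate symmetric bilinear form.  Then `M` admits an orthogonal decomposition
`M = M_1 ⊥ ⋯ ⊥ M_n` where each `M_i` is free over `R/𝔪^i` (expressed by an `R`-linear
isomorphism with a finite power of `R/𝔪^i`) and the restriction of the form to each `M_i`
is non-degenerate, i.e. `M_i ∩ M_i^⊥ = 0`. -/
theorem orthogonal_decomposition_local (R M N : Type*) [CommRing R] [IsLocalRing R]
    [IsArtinianRing R] [IsPrincipalIdealRing R] [AddCommGroup M] [Module R M]
    [Module.Finite R M] [AddCommGroup N] [Module R N] (e : N ≃ₗ[R] R)
    (n : ℕ) (hn : Order.krullDim (Submodule R R) = (n : WithBot ℕ∞))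
    (B : M →ₗ[R] M →ₗ[R] N) (hB : ∀ x y, B x y = B y x) (hBnd : Function.Bijective B) :
    ∃ (Mi : Fin n → Submodule R M) (k : Fin n → ℕ),
      DirectSum.IsInternal Mi ∧
      (∀ i j, i ≠ j → ∀ x ∈ Mi i, ∀ y ∈ Mi j, B x y = 0) ∧
      (∀ i, Nonempty
        (↥(Mi i) ≃ₗ[R] (Fin (k i) → R ⧸ (IsLocalRing.maximalIdeal R) ^ (i.val + 1)))) ∧
      (∀ i, Mi i ⊓ orth B (Mi i) = ⊥) := by
  obtain ⟨π, hπ⟩ := (IsPrincipalIdealRing.principal (IsLocalRing.maximalIdeal R)).principal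
  let C := B.compr₂ e.toLinearMap
  have horth : ∀ L, orth C L = orth B L := orth_compr₂_of_injective e.injective
  have hnd : Disjoint (⊤ : Submodule R M) (orth C ⊤) := by
    refine Submodule.disjoint_def.mpr fun x _ hx => hBnd.injective (LinearMap.ext fun y => ?_)
    rw [horth] at hx
    simpa using hx y trivial
  obtain ⟨V, hV, hfree⟩ := exists_isOrthDecomposition hπ (pow_eq_zero_iff_of_krullDim_eq hπ hn)
    (fun x y => congrArg e (hB x y)) ⊤ hnd
  choose k hk using hfree
  refine ⟨V, k, DirectSum.isInternal_submodule_of_iSupIndep_of_iSup_eq_top hV.iSupIndep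
    hV.iSup_eq, fun i j hij x hx y hy => ?_, hk, fun i => ?_⟩
  · exact (horth _ ▸ hV.le_orth i j hij hx : x ∈ orth B (V j)) y hy
  · rw [← horth, ← disjoint_iff]
    exact hV.disjoint_orth i
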